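/- arXiv:0909.1366 — 2 statements merged into one kernel-verified Lean document; each statement's English description precedes it below -/
import Mathlib

section
/- For ĥ₁(t) = (2/t) J₁(t) (extended continuously at 0 by 1), and any r > 0, k > 0, and t ∈ [0,1], one has |ĥ₁(k r √(1−t)) − ĥ₁(k r)| ≤ (1/2)(k r/2)² t. -/
open Real

/-- The Bessel function of the first kind of integer order `m`. -/
noncomputable def besselJ (m : ℕ) (t : ℝ) : ℝ :=
  (t / 2) ^ m *
    ∑' n : ℕ, (-1 : ℝ) ^ n / ((Nat.factorial (m + n) : ℝ) * (Nat.factorial n : ℝ)) *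
      (t / 2) ^ (2 * n)

/-- `ĥ₁(t) = (2/t) J₁(t)`, extended continuously at `0` by `1`. -/
noncomputable def hatJ1 (t : ℝ) : ℝ :=
  if t = 0 then 1 else (2 / t) * besselJ 1 t

/-! Termwise integration of the cosine series against the moments `∫ x^(2n) √(1 - x²)`, which are
Wallis integrals after `x = sin θ`, gives Poisson's integral
`ĥ₁(a) = (2/π) ∫_{-1}^{1} √(1 - x²) cos (a x) dx`. As `|cos p - cos q| ≤ |p² - q²| / 2` and
`∫ x² √(1 - x²) = π/8`, this yields `|ĥ₁(a) - ĥ₁(b)| ≤ |a² - b²| / 8`, and for `a = kr√(1 - t)`,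
`b = kr` the right-hand side is `(kr)² t / 8`. -/

open Nat MeasureTheory

lemma integral_sin_pow_two_mul (n : ℕ) :
    ∫ x in -(π / 2)..π / 2, sin x ^ (2 * n) = π * (2 * n)! / (4 ^ n * n ! ^ 2) := by
  induction n with
  | zero => simp
  | succ n ih =>
    rw [show 2 * (n + 1) = 2 * n + 2 by ring, integral_sin_pow, ih, Nat.factorial_succ,
      show 2 * n + 2 = (2 * n + 1) + 1 by ring, Nat.factorial_succ, Nat.factorial_succ]
    simp only [sin_neg, cos_neg, cos_pi_div_two, mul_zero, sub_zero, zero_div, zero_add]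
    push_cast
    field_simp
    ring

lemma integral_pow_two_mul_mul_sqrt_one_sub_sq (n : ℕ) :
    ∫ x in (-1 : ℝ)..1, x ^ (2 * n) * √(1 - x ^ 2) =
      π / 2 * (2 * n)! / (4 ^ n * (n ! * (n + 1)!)) := by
  have hsubst : ∫ x in (-1 : ℝ)..1, x ^ (2 * n) * √(1 - x ^ 2) =
      ∫ x in -(π / 2)..π / 2, (sin x ^ (2 * n) - sin x ^ (2 * (n + 1))) := calc
    _ = ∫ x in sin (-(π / 2))..sin (π / 2), x ^ (2 * n) * √(1 - x ^ 2) := by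
      rw [sin_neg, sin_pi_div_two]
    _ = ∫ x in -(π / 2)..π / 2, sin x ^ (2 * n) * √(1 - sin x ^ 2) * cos x :=
      (intervalIntegral.integral_comp_mul_deriv (fun x _ => hasDerivAt_sin x) continuousOn_cos
        (by fun_prop)).symm
    _ = _ := by
      refine intervalIntegral.integral_congr fun x hx => ?_
      rw [Set.uIcc_of_le (neg_le_self (by positivity))] at hx
      simp only [← cos_eq_sqrt_one_sub_sin_sq hx.1 hx.2]
      rw [show 2 * (n + 1) = 2 * n + 2 by ring, pow_add, sin_sq]
      ring
  rw [hsubst, intervalIntegral.integral_sub (by apply Continuous.intervalIntegrable; fun_prop)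
      (by apply Continuous.intervalIntegrable; fun_prop),
    integral_sin_pow_two_mul, integral_sin_pow_two_mul, Nat.factorial_succ,
    show 2 * (n + 1) = (2 * n + 1) + 1 by ring, Nat.factorial_succ, Nat.factorial_succ]
  push_cast
  field_simp
  ring

lemma hasSum_intervalIntegral_mul_cos {f : ℝ → ℝ} (hf : IntervalIntegrable f volume (-1) 1)
    (c : ℝ) :
    HasSum
      (fun n : ℕ => (-1) ^ n * c ^ (2 * n) / (2 * n)! * ∫ x in (-1 : ℝ)..1, x ^ (2 * n) * f x)
      (∫ x in (-1 : ℝ)..1, f x * cos (c * x)) := by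
  simp_rw [← intervalIntegral.integral_const_mul]
  refine intervalIntegral.hasSum_integral_of_dominated_convergence
    (fun n x => |c| ^ (2 * n) / (2 * n)! * |f x|) (fun n => ?_) (fun n => ?_) ?_ ?_ ?_
  · exact ((continuous_pow _).aestronglyMeasurable.mul hf.def'.aestronglyMeasurable).const_mul _
  · refine ae_of_all _ fun x hx => ?_
    have hx1 : |x| ≤ 1 := by
      rw [Set.uIoc_of_le (by norm_num)] at hx
      exact abs_le.2 ⟨hx.1.le, hx.2⟩
    simp only [norm_mul, norm_div, norm_pow, norm_neg, norm_one, one_pow, one_mul,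
      Real.norm_eq_abs, Nat.abs_cast]
    gcongr
    exact mul_le_of_le_one_left (abs_nonneg _) (pow_le_one₀ (abs_nonneg x) hx1)
  · exact ae_of_all _ fun x _ => (Real.hasSum_cosh |c|).summable.mul_right _
  · simp_rw [tsum_mul_right, (Real.hasSum_cosh |c|).tsum_eq]
    exact hf.abs.const_mul _
  · refine ae_of_all _ fun x _ => ?_
    have hterm (n : ℕ) : f x * ((-1) ^ n * (c * x) ^ (2 * n) / (2 * n)!) =
        (-1) ^ n * c ^ (2 * n) / (2 * n)! * (x ^ (2 * n) * f x) := by ring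
    simpa only [hterm] using (Real.hasSum_cos (c * x)).mul_left (f x)

lemma hatJ1_eq_tsum (a : ℝ) :
    hatJ1 a = ∑' n : ℕ, (-1) ^ n / ((n + 1)! * n ! : ℝ) * (a / 2) ^ (2 * n) := by
  rcases eq_or_ne a 0 with rfl | ha
  · rw [hatJ1, if_pos rfl, tsum_eq_single 0 fun n hn => by simp [hn]]
    simp
  · rw [hatJ1, if_neg ha, besselJ, pow_one, ← mul_assoc, show 2 / a * (a / 2) = 1 by field_simp,
      one_mul]
    simp_rw [add_comm 1]

lemma hatJ1_eq_integral (a : ℝ) :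
    hatJ1 a = 2 / π * ∫ x in (-1 : ℝ)..1, √(1 - x ^ 2) * cos (a * x) := by
  have hsum := hasSum_intervalIntegral_mul_cos (f := fun x => √(1 - x ^ 2))
    (by apply Continuous.intervalIntegrable; fun_prop) a
  rw [hatJ1_eq_tsum, ← hsum.tsum_eq, ← tsum_mul_left]
  refine tsum_congr fun n => ?_
  rw [integral_pow_two_mul_mul_sqrt_one_sub_sq, div_pow, pow_mul 2,
    show (2 : ℝ) ^ 2 = 4 by norm_num]
  field_simp

lemma abs_cos_sub_cos_le (p q : ℝ) : |cos p - cos q| ≤ |p ^ 2 - q ^ 2| / 2 := calc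
  |cos p - cos q| = 2 * (|sin ((p + q) / 2)| * |sin ((p - q) / 2)|) := by
    rw [cos_sub_cos, abs_mul, abs_mul]
    norm_num [mul_assoc]
  _ ≤ 2 * (|(p + q) / 2| * |(p - q) / 2|) := by
    gcongr 2 * ?_
    exact mul_le_mul abs_sin_le_abs abs_sin_le_abs (abs_nonneg _) (abs_nonneg _)
  _ = |p ^ 2 - q ^ 2| / 2 := by
    rw [← abs_mul, show (p + q) / 2 * ((p - q) / 2) = (p ^ 2 - q ^ 2) / 4 by ring, abs_div]
    norm_num
    ring

lemma integral_sq_mul_sqrt_one_sub_sq :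
    ∫ x in (-1 : ℝ)..1, x ^ 2 * √(1 - x ^ 2) = π / 8 := by
  convert integral_pow_two_mul_mul_sqrt_one_sub_sq 1 using 1
  norm_num

lemma abs_hatJ1_sub_hatJ1_le (a b : ℝ) : |hatJ1 a - hatJ1 b| ≤ |a ^ 2 - b ^ 2| / 8 := by
  have hdiff : hatJ1 a - hatJ1 b =
      2 / π * ∫ x in (-1 : ℝ)..1, √(1 - x ^ 2) * (cos (a * x) - cos (b * x)) := by
    rw [hatJ1_eq_integral, hatJ1_eq_integral, ← mul_sub, ← intervalIntegral.integral_sub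
      (by apply Continuous.intervalIntegrable; fun_prop)
      (by apply Continuous.intervalIntegrable; fun_prop)]
    simp_rw [mul_sub]
  have hint : |∫ x in (-1 : ℝ)..1, √(1 - x ^ 2) * (cos (a * x) - cos (b * x))| ≤
      |a ^ 2 - b ^ 2| / 2 * (π / 8) := by
    rw [← integral_sq_mul_sqrt_one_sub_sq, ← intervalIntegral.integral_const_mul,
      ← Real.norm_eq_abs]
    refine intervalIntegral.norm_integral_le_of_norm_le (by norm_num)
      (ae_of_all _ fun x _ => ?_) (by apply Continuous.intervalIntegrable; fun_prop)
    rw [Real.norm_eq_abs, abs_mul, abs_of_nonneg (sqrt_nonneg _)]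
    calc √(1 - x ^ 2) * |cos (a * x) - cos (b * x)|
        ≤ √(1 - x ^ 2) * (|(a * x) ^ 2 - (b * x) ^ 2| / 2) := by
          gcongr
          exact abs_cos_sub_cos_le _ _
      _ = _ := by
          rw [show (a * x) ^ 2 - (b * x) ^ 2 = x ^ 2 * (a ^ 2 - b ^ 2) by ring, abs_mul,
            abs_of_nonneg (sq_nonneg x)]
          ring
  calc |hatJ1 a - hatJ1 b| ≤ 2 / π * (|a ^ 2 - b ^ 2| / 2 * (π / 8)) := by
        rw [hdiff, abs_mul, abs_of_pos (by positivity)]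
        gcongr
    _ = |a ^ 2 - b ^ 2| / 8 := by
        field_simp

theorem hatJ1_difference_bound_general (k r : ℝ)
    (t : ℝ) (ht0 : 0 ≤ t) (ht1 : t ≤ 1) :
    |hatJ1 (k * r * Real.sqrt (1 - t)) - hatJ1 (k * r)| ≤ (1 / 2) * (k * r / 2) ^ 2 * t := by
  have hsq : (k * r * √(1 - t)) ^ 2 - (k * r) ^ 2 = -((k * r) ^ 2 * t) := by
    rw [mul_pow, sq_sqrt (by linarith)]
    ring
  calc _ ≤ |(k * r * √(1 - t)) ^ 2 - (k * r) ^ 2| / 8 := abs_hatJ1_sub_hatJ1_le _ _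
    _ = _ := by
      rw [hsq, abs_neg, abs_of_nonneg (by positivity)]
      ring

theorem hatJ1_difference_bound (k r : ℝ) (hk : 0 < k) (hr : 0 < r)
    (t : ℝ) (ht0 : 0 ≤ t) (ht1 : t ≤ 1) :
    |hatJ1 (k * r * Real.sqrt (1 - t)) - hatJ1 (k * r)| ≤ (1 / 2) * (k * r / 2) ^ 2 * t :=
  hatJ1_difference_bound_general k r t ht0 ht1
end

section
/- For n ≥ 1, N ≥ 1 and z ∈ ℂ, the tail of the Mittag-Leffler series satisfies |E_{1/n}(z) − E_{1/n}^{nN}(z)| ≤ ∑_{l=1}^n |z|^{nN+l}/Γ(N+1+l/n) · e^{|Re(z^n)|}, where E_{1/n}^{nN}(z) = ∑_{m=0}^{nN} z^m/Γ(m/n+1). -/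
/-!
Split the tail by the residue of the index modulo `n`: the class of `n * N + l` contributes
`z ^ (n * N + l) * ∑ₖ (z ^ n) ^ k / Γ(a + k)` with `a = N + 1 + l / n > 1`.
Euler's Beta integral `Γ(a - 1) k! / Γ(a + k) = ∫₀¹ x ^ (a - 2) (1 - x) ^ k dx` lets one sum
the exponential series under the integral:
`∑ₖ w ^ k / Γ(a + k) = Γ(a - 1)⁻¹ ∫₀¹ x ^ (a - 2) e ^ (w (1 - x)) dx`,
of modulus at most `e ^ |Re w| / ((a - 1) Γ(a - 1)) = e ^ |Re w| / Γ(a)`.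
-/

open Real Finset

/-- The Mittag-Leffler function of parameter `1/n` (complex argument). -/
noncomputable def ML (n : ℕ) (z : ℂ) : ℂ :=
  ∑' m : ℕ, z ^ m / (Real.Gamma ((m : ℝ) / n + 1) : ℂ)

/-- Its truncation at degree `nN`. -/
noncomputable def MLtrunc (n N : ℕ) (z : ℂ) : ℂ :=
  ∑ m ∈ Finset.range (n * N + 1), z ^ m / (Real.Gamma ((m : ℝ) / n + 1) : ℂ)

open MeasureTheory
open scoped Nat

theorem hasSum_of_hasSum_mul_add {α : Type*} [AddCommMonoid α] [TopologicalSpace α]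
    [ContinuousAdd α] {f : ℕ → α} {n : ℕ} {s : ℕ → α} (hn : n ≠ 0)
    (hf : ∀ r < n, HasSum (fun k ↦ f (n * k + r)) (s r)) :
    HasSum f (∑ r ∈ range n, s r) := by
  have hclass : ∀ r < n, HasSum ({m | m % n = r}.indicator f) (s r) := by
    intro r hr
    have hinj : Function.Injective (fun k ↦ n * k + r) := fun k l hkl ↦ by
      simpa [(Nat.zero_le r).trans_lt hr |>.ne'] using hkl
    rw [← hinj.hasSum_iff]
    · simpa [Function.comp_def, Set.indicator, Nat.mul_add_mod, Nat.mod_eq_of_lt hr]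
        using hf r hr
    · intro m hm
      refine Set.indicator_of_notMem (s := {m | m % n = r})
        (fun (hmr : m % n = r) ↦ hm ⟨m / n, ?_⟩) f
      simp only [← hmr, Nat.div_add_mod]
  convert hasSum_sum fun r hr ↦ hclass r (mem_range.1 hr) with m
  simp [Set.indicator_apply, Nat.mod_lt m (Nat.pos_of_ne_zero hn)]

theorem integral_rpow_mul_one_sub_rpow {u v : ℝ} (hu : 0 < u) (hv : 0 < v) :
    ∫ x in (0 : ℝ)..1, x ^ (u - 1) * (1 - x) ^ (v - 1) = Gamma u * Gamma v / Gamma (u + v) := by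
  have hΓ : Gamma (u + v) ≠ 0 := (Gamma_pos_of_pos (by positivity)).ne'
  rw [eq_div_iff hΓ, ← Complex.ofReal_inj]
  push_cast
  rw [← Complex.Gamma_ofReal, ← Complex.Gamma_ofReal, ← Complex.Gamma_ofReal, Complex.ofReal_add,
    Complex.Gamma_mul_Gamma_eq_betaIntegral (by simpa) (by simpa), mul_comm, Complex.betaIntegral,
    ← intervalIntegral.integral_ofReal]
  congr 1
  refine intervalIntegral.integral_congr fun x hx ↦ ?_
  rw [Set.uIcc_of_le zero_le_one] at hx
  push_cast
  rw [Complex.ofReal_cpow hx.1, Complex.ofReal_cpow (sub_nonneg.2 hx.2)]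
  push_cast
  ring

theorem integral_rpow_mul_pow_div_factorial {a : ℝ} (ha : 1 < a) (w : ℂ) (k : ℕ) :
    ∫ x in (0 : ℝ)..1, ((x ^ (a - 2) : ℝ) : ℂ) * ((w * (1 - x)) ^ k / k !) =
      Gamma (a - 1) * (w ^ k / Gamma (a + k)) := by
  have hB := integral_rpow_mul_one_sub_rpow (u := a - 1) (v := k + 1) (by linarith) (by positivity)
  simp only [add_sub_cancel_right, rpow_natCast, Gamma_nat_eq_factorial, sub_sub,
    show a - 1 + (k + 1) = a + k by ring, one_add_one_eq_two] at hB
  have hΓ : (Gamma (a + k) : ℂ) ≠ 0 :=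
    Complex.ofReal_ne_zero.2 (Gamma_pos_of_pos (by positivity)).ne'
  calc ∫ x in (0 : ℝ)..1, ((x ^ (a - 2) : ℝ) : ℂ) * ((w * (1 - x)) ^ k / k !)
      = w ^ k / k ! * ∫ x in (0 : ℝ)..1, ((x ^ (a - 2) * (1 - x) ^ k : ℝ) : ℂ) := by
        rw [← intervalIntegral.integral_const_mul]
        congr 1 with x
        push_cast
        rw [mul_pow]
        ring
    _ = Gamma (a - 1) * (w ^ k / Gamma (a + k)) := by
        rw [intervalIntegral.integral_ofReal, hB]
        have hk : (k ! : ℂ) ≠ 0 := by exact_mod_cast k.factorial_ne_zero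
        push_cast
        field_simp

theorem hasSum_pow_div_Gamma_add {a : ℝ} (ha : 1 < a) (w : ℂ) :
    HasSum (fun k : ℕ ↦ w ^ k / (Gamma (a + k) : ℂ))
      ((Gamma (a - 1) : ℂ)⁻¹ *
        ∫ x in (0 : ℝ)..1, ((x ^ (a - 2) : ℝ) : ℂ) * Complex.exp (w * (1 - x))) := by
  have hΓ : (Gamma (a - 1) : ℂ) ≠ 0 := Complex.ofReal_ne_zero.2 (Gamma_pos_of_pos (by linarith)).ne'
  have hrpow : IntervalIntegrable (fun x : ℝ ↦ x ^ (a - 2)) volume 0 1 :=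
    intervalIntegral.intervalIntegrable_rpow' (by linarith)
  have hdom := intervalIntegral.hasSum_integral_of_dominated_convergence
    (a := 0) (b := 1) (μ := volume)
    (F := fun (k : ℕ) (x : ℝ) ↦ ((x ^ (a - 2) : ℝ) : ℂ) * ((w * (1 - x)) ^ k / k !))
    (f := fun x ↦ ((x ^ (a - 2) : ℝ) : ℂ) * Complex.exp (w * (1 - x)))
    (fun k x ↦ ‖w‖ ^ k / k ! * x ^ (a - 2)) (fun k ↦ by fun_prop) ?_ ?_ ?_ ?_
  · simpa [integral_rpow_mul_pow_div_factorial ha, ← mul_assoc, hΓ]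
      using hdom.mul_left (Gamma (a - 1) : ℂ)⁻¹
  · refine fun k ↦ ae_of_all _ fun x hx ↦ ?_
    rw [Set.uIoc_of_le zero_le_one] at hx
    have h1x : ‖(1 : ℂ) - x‖ ≤ 1 := by
      rw [← Complex.ofReal_one, ← Complex.ofReal_sub, Complex.norm_real, norm_of_nonneg] <;>
        linarith [hx.1, hx.2]
    rw [norm_mul, Complex.norm_real, norm_of_nonneg (rpow_nonneg hx.1.le _), mul_comm, norm_div,
      mul_pow, norm_mul, norm_pow, norm_pow, Complex.norm_natCast]
    refine mul_le_mul_of_nonneg_right ?_ (rpow_nonneg hx.1.le _)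
    gcongr
    exact mul_le_of_le_one_right (by positivity) (pow_le_one₀ (norm_nonneg _) h1x)
  · exact ae_of_all _ fun x _ ↦ (Real.summable_pow_div_factorial _).mul_right _
  · simp_rw [tsum_mul_right]
    exact hrpow.const_mul _
  · refine ae_of_all _ fun x _ ↦ ?_
    have hexp := NormedSpace.expSeries_div_hasSum_exp (w * (1 - (x : ℂ)))
    rw [← Complex.exp_eq_exp_ℂ] at hexp
    exact hexp.mul_left _

theorem norm_integral_rpow_mul_cexp_le {a : ℝ} (ha : 1 < a) (w : ℂ) :
    ‖∫ x in (0 : ℝ)..1, ((x ^ (a - 2) : ℝ) : ℂ) * Complex.exp (w * (1 - x))‖ ≤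
      exp |w.re| / (a - 1) := by
  calc ‖∫ x in (0 : ℝ)..1, ((x ^ (a - 2) : ℝ) : ℂ) * Complex.exp (w * (1 - x))‖
      ≤ ∫ x in (0 : ℝ)..1, x ^ (a - 2) * exp |w.re| := by
        refine intervalIntegral.norm_integral_le_of_norm_le zero_le_one
          (ae_of_all _ fun x hx ↦ ?_)
          ((intervalIntegral.intervalIntegrable_rpow' (by linarith)).mul_const _)
        rw [norm_mul, Complex.norm_real, norm_of_nonneg (rpow_nonneg hx.1.le _), Complex.norm_exp]
        gcongr
        · exact rpow_nonneg hx.1.le _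
        have hre : (w * (1 - x)).re = w.re * (1 - x) := by simp
        rw [hre]
        nlinarith [le_abs_self w.re, abs_nonneg w.re, hx.1, hx.2]
    _ = exp |w.re| / (a - 1) := by
        rw [intervalIntegral.integral_mul_const, integral_rpow (Or.inl (by linarith)),
          zero_rpow (by linarith), one_rpow]
        field_simp
        ring

theorem norm_tsum_pow_div_Gamma_add_le {a : ℝ} (ha : 1 < a) (w : ℂ) :
    ‖∑' k : ℕ, w ^ k / (Gamma (a + k) : ℂ)‖ ≤ exp |w.re| / Gamma a := by
  have hΓ : 0 < Gamma (a - 1) := Gamma_pos_of_pos (by linarith)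
  have hΓa : Gamma a = (a - 1) * Gamma (a - 1) := by
    rw [← Gamma_add_one (sub_pos.2 ha).ne', sub_add_cancel]
  rw [(hasSum_pow_div_Gamma_add ha w).tsum_eq, norm_mul, norm_inv, Complex.norm_real,
    norm_of_nonneg hΓ.le, hΓa, mul_comm, ← div_div, div_eq_mul_inv _ (Gamma (a - 1))]
  gcongr
  exact norm_integral_rpow_mul_cexp_le ha w

theorem pow_mul_add_div_Gamma {n : ℕ} (hn : n ≠ 0) (z : ℂ) (k m : ℕ) :
    z ^ (n * k + m) / (Gamma (((n * k + m : ℕ) : ℝ) / n + 1) : ℂ) =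
      z ^ m * ((z ^ n) ^ k / (Gamma (((m : ℝ) / n + 1) + k) : ℂ)) := by
  have harg : ((n * k + m : ℕ) : ℝ) / n + 1 = ((m : ℝ) / n + 1) + k := by
    field_simp
    push_cast
    ring
  rw [harg, pow_add, pow_mul]
  ring

theorem mittagLeffler_tail_bound_general (n N : ℕ) (hn : 1 ≤ n) (z : ℂ) :
    ‖ML n z - MLtrunc n N z‖
      ≤ (∑ l ∈ Finset.Icc 1 n,
            ‖z‖ ^ (n * N + l) / Real.Gamma ((N : ℝ) + 1 + (l : ℝ) / n)) *
          Real.exp |(z ^ n).re| := by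
  have hn0 : n ≠ 0 := by omega
  set M := n * N + 1
  set S : ℕ → ℂ := fun m ↦ ∑' k : ℕ, (z ^ n) ^ k / (Gamma (((m : ℝ) / n + 1) + k) : ℂ)
  have ha : ∀ r, 1 < ((r + M : ℕ) : ℝ) / n + 1 := fun r ↦ lt_add_of_pos_left 1 (by positivity)
  have htail : HasSum (fun j ↦ z ^ (j + M) / (Gamma (((j + M : ℕ) : ℝ) / n + 1) : ℂ))
      (∑ r ∈ range n, z ^ (r + M) * S (r + M)) := by
    refine hasSum_of_hasSum_mul_add hn0 fun r _ ↦ ?_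
    simp only [Nat.add_assoc, pow_mul_add_div_Gamma hn0]
    exact (hasSum_pow_div_Gamma_add (ha r) _).summable.hasSum.mul_left _
  have hML : ML n z - MLtrunc n N z = ∑ r ∈ range n, z ^ (r + M) * S (r + M) := by
    rw [ML, ((hasSum_nat_add_iff (f := fun m : ℕ ↦ z ^ m / (Gamma ((m : ℝ) / n + 1) : ℂ)) M).1
      htail).tsum_eq, MLtrunc, add_sub_cancel_right]
  rw [hML, sum_mul, ← Ico_add_one_right_eq_Icc, sum_Ico_eq_sum_range, add_tsub_cancel_right]
  refine norm_sum_le_of_le _ fun r _ ↦ ?_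
  have hΓ : ((r + M : ℕ) : ℝ) / n + 1 = N + 1 + ((1 + r : ℕ) : ℝ) / n := by
    field_simp
    push_cast [M]
    ring
  rw [norm_mul, norm_pow, show n * N + (1 + r) = r + M by omega, ← hΓ, div_mul_eq_mul_div,
    mul_div_assoc]
  gcongr
  exact norm_tsum_pow_div_Gamma_add_le (ha r) _

theorem mittagLeffler_tail_bound (n N : ℕ) (hn : 1 ≤ n) (hN : 1 ≤ N) (z : ℂ) :
    ‖ML n z - MLtrunc n N z‖
      ≤ (∑ l ∈ Finset.Icc 1 n,
            ‖z‖ ^ (n * N + l) / Real.Gamma ((N : ℝ) + 1 + (l : ℝ) / n)) *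
          Real.exp |(z ^ n).re| :=
  mittagLeffler_tail_bound_general n N hn z
end
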